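/- Let P_{m,k}(q) = \det( h_{m-k-i+2j-1}(\{1,q\}^{i-j+2}) )_{i,j \in \{0,\dots,k-1\}}. Then P_{m,k} is a palindromic (self-reciprocal) polynomial in q: if d = \deg P_{m,k}, then q^d P_{m,k}(1/q) = P_{m,k}(q). -/

import Mathlib

/-!
Each entry `h_j({1,q}^r)` is a palindromic polynomial of degree `j`: its coefficient of `q^i`
is `C(r-1+i, r-1) C(r-1+j-i, r-1)`, symmetric under `i ↦ j - i`. The degree index of entry
`(i, j)` splits as a row part plus a column part, so in the Leibniz expansion every nonzero
term is a product of palindromes whose degrees add up to the same `D`; hence `P_{m,k}` is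
palindromic about `D / 2`. Its degree is exactly `D` because the constant term, the binomial
determinant `Δ(n, k) = det (C(n + j, i + 1 - j))` with `n = m - k`, is positive: by Pascal's
rule `Δ(n + 1, k + 1) = Δ(n, k + 1) + Δ(n + 2, k)`.
-/

open Finset Polynomial

/-- `h_j({1,q}^r)` as a polynomial in `q` over `ℤ`: the complete homogeneous symmetric
polynomial of degree `j` in `2r` variables, `r` specialized to `q` and `r` to `1`;
it vanishes for `j < 0`, and `h_0 = 1`. -/
noncomputable def hgen (j r : ℤ) : Polynomial ℤ :=
  if 0 ≤ j ∧ 0 < r then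
    ∑ i ∈ range (j.toNat + 1),
      ((((r - 1).toNat + i).choose (r - 1).toNat : Polynomial ℤ) *
        ((j.toNat + (r - 1).toNat - i).choose (r - 1).toNat : Polynomial ℤ)) * X ^ i
  else if j = 0 then 1 else 0

/-- The `q`-Faulhaber polynomial
`P_{m,k} = det( h_{m-k-i+2j-1}({1,q}^{i-j+2}) )_{i,j ∈ {0,…,k-1}}`. -/
noncomputable def P (m k : ℕ) : Polynomial ℤ :=
  Matrix.det (Matrix.of fun i j : Fin k =>
    hgen ((m : ℤ) - k - i + 2 * j - 1) ((i : ℤ) - j + 2))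

namespace Polynomial

/-- `N` need not be the degree of `p`: `X` is palindromic for `N = 2`. -/
structure IsPalindromic {R : Type*} [Semiring R] (N : ℕ) (p : R[X]) : Prop where
  natDegree_le : p.natDegree ≤ N
  reflect_eq : p.reflect N = p

namespace IsPalindromic

section Semiring

variable {R : Type*} [Semiring R]

theorem zero (N : ℕ) : IsPalindromic N (0 : R[X]) := ⟨by simp, reflect_zero⟩

theorem one : IsPalindromic 0 (1 : R[X]) := ⟨by simp, by simp⟩

theorem add {N : ℕ} {p q : R[X]} (hp : IsPalindromic N p) (hq : IsPalindromic N q) :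
    IsPalindromic N (p + q) :=
  ⟨natDegree_add_le_of_degree_le hp.natDegree_le hq.natDegree_le, by
    rw [reflect_add, hp.reflect_eq, hq.reflect_eq]⟩

theorem sum {ι : Type*} {N : ℕ} {s : Finset ι} {f : ι → R[X]}
    (h : ∀ i ∈ s, IsPalindromic N (f i)) : IsPalindromic N (∑ i ∈ s, f i) := by
  induction s using Finset.cons_induction with
  | empty => simpa using zero N
  | cons a s ha ih =>
    rw [sum_cons]
    exact (h a (mem_cons_self a s)).add (ih fun i hi => h i (mem_cons_of_mem hi))

theorem mul {M N : ℕ} {p q : R[X]} (hp : IsPalindromic M p) (hq : IsPalindromic N q) :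
    IsPalindromic (M + N) (p * q) :=
  ⟨natDegree_mul_le_of_le hp.natDegree_le hq.natDegree_le, by
    rw [reflect_mul _ _ hp.natDegree_le hq.natDegree_le, hp.reflect_eq, hq.reflect_eq]⟩

theorem C_mul {N : ℕ} {p : R[X]} (hp : IsPalindromic N p) (a : R) :
    IsPalindromic N (C a * p) :=
  ⟨natDegree_C_mul_le a p |>.trans hp.natDegree_le, by rw [reflect_C_mul, hp.reflect_eq]⟩

theorem natDegree_eq {N : ℕ} {p : R[X]} (hp : IsPalindromic N p) (h0 : p.coeff 0 ≠ 0) :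
    p.natDegree = N := by
  refine hp.natDegree_le.antisymm (le_natDegree_of_ne_zero ?_)
  rwa [← hp.reflect_eq, coeff_reflect, revAt_le le_rfl, Nat.sub_self]

end Semiring

theorem prod {R ι : Type*} [CommSemiring R] {s : Finset ι} {f : ι → R[X]} {e : ι → ℕ}
    (h : ∀ i ∈ s, IsPalindromic (e i) (f i)) :
    IsPalindromic (∑ i ∈ s, e i) (∏ i ∈ s, f i) := by
  induction s using Finset.cons_induction with
  | empty => simpa using one
  | cons a s ha ih =>
    rw [prod_cons, sum_cons]
    exact (h a (mem_cons_self a s)).mul (ih fun i hi => h i (mem_cons_of_mem hi))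

end IsPalindromic

theorem isPalindromic_sum_C_mul_X_pow {R : Type*} [Semiring R] (N : ℕ) (a : ℕ → R)
    (h : ∀ i ≤ N, a (N - i) = a i) :
    IsPalindromic N (∑ i ∈ range (N + 1), C (a i) * X ^ i) := by
  refine ⟨natDegree_sum_le_of_forall_le _ _ fun i hi => ?_, ?_⟩
  · exact (natDegree_C_mul_X_pow_le _ _).trans (Nat.lt_succ_iff.mp (mem_range.mp hi))
  · ext n
    simp only [coeff_reflect, finsetSum_coeff, coeff_C_mul_X_pow, sum_ite_eq, mem_range]
    by_cases hn : n ≤ N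
    · simp [revAt_le hn, h n hn, Nat.lt_succ_iff.mpr hn]
    · simp [revAt_eq_self_of_lt (not_le.mp hn)]

end Polynomial

theorem Matrix.det_isPalindromic {n R : Type*} [Fintype n] [DecidableEq n] [CommRing R]
    (M : Matrix n n R[X]) (u v : n → ℤ)
    (hpal : ∀ i j, IsPalindromic (u i + v j).toNat (M i j))
    (hzero : ∀ i j, u i + v j < 0 → M i j = 0) :
    IsPalindromic (∑ i, u i + ∑ j, v j).toNat M.det := by
  rw [Matrix.det_apply']
  refine IsPalindromic.sum fun σ _ => ?_
  by_cases hneg : ∃ j, u (σ j) + v j < 0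
  · obtain ⟨j, hj⟩ := hneg
    rw [prod_eq_zero (f := fun i => M (σ i) i) (mem_univ j) (hzero _ _ hj), mul_zero]
    exact IsPalindromic.zero _
  · push Not at hneg
    have hdeg : ∑ j, (u (σ j) + v j).toNat = (∑ i, u i + ∑ j, v j).toNat := by
      have : ((∑ j, (u (σ j) + v j).toNat : ℕ) : ℤ) = ∑ i, u i + ∑ j, v j := by
        push_cast [Int.toNat_of_nonneg (hneg _)]
        rw [sum_add_distrib, Equiv.sum_comp σ u]
      omega
    rw [← hdeg, ← C_eq_intCast]
    exact (IsPalindromic.prod fun j _ => hpal _ _).C_mul _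

theorem hgen_of_neg {j : ℤ} (hj : j < 0) (r : ℤ) : hgen j r = 0 := by
  rw [hgen, if_neg (by omega), if_neg (by omega)]

theorem hgen_isPalindromic (j r : ℤ) : IsPalindromic j.toNat (hgen j r) := by
  unfold hgen
  split_ifs with _ hj
  · set R := (r - 1).toNat
    have hsymm : ∀ i ≤ j.toNat,
        ((R + (j.toNat - i)).choose R * (j.toNat + R - (j.toNat - i)).choose R : ℤ) =
          (R + i).choose R * (j.toNat + R - i).choose R := fun i hi => by
      rw [show j.toNat + R - (j.toNat - i) = R + i by omega,
        show R + (j.toNat - i) = j.toNat + R - i by omega, mul_comm]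
    convert isPalindromic_sum_C_mul_X_pow j.toNat
      (fun i => ((R + i).choose R * (j.toNat + R - i).choose R : ℤ)) hsymm using 3 with i
    simp only [map_mul, map_natCast]
  · simpa [hj] using IsPalindromic.one
  · exact IsPalindromic.zero _

def binom (a : ℕ) (b : ℤ) : ℤ := if 0 ≤ b then (a.choose b.toNat : ℤ) else 0

theorem binom_of_neg (a : ℕ) {b : ℤ} (hb : b < 0) : binom a b = 0 := if_neg (by omega)

theorem binom_zero_right (a : ℕ) : binom a 0 = 1 := by simp [binom]

theorem binom_succ_succ (a : ℕ) (b : ℤ) :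
    binom (a + 1) (b + 1) = binom a (b + 1) + binom a b := by
  unfold binom
  rcases lt_trichotomy b (-1) with hb | rfl | hb
  · simp only [if_neg (show ¬ 0 ≤ b + 1 by omega), if_neg (show ¬ 0 ≤ b by omega), add_zero]
  · simp
  · rw [if_pos (by omega), if_pos (by omega), if_pos (by omega),
      show (b + 1).toNat = b.toNat + 1 by omega, Nat.choose_succ_succ', Nat.cast_add, add_comm]

def binomialMatrix (n k : ℕ) : Matrix (Fin k) (Fin k) ℤ :=
  Matrix.of fun i j => binom (n + j) ((i : ℤ) + 1 - j)

theorem det_binomialMatrix_succ (n k : ℕ) :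
    (binomialMatrix (n + 1) (k + 1)).det =
      (binomialMatrix n (k + 1)).det + (binomialMatrix (n + 2) k).det := by
  set A := binomialMatrix (n + 1) (k + 1)
  -- By Pascal's rule, row `i + 1` of `A` is the sum of rows `i + 1` and `i` of
  -- `binomialMatrix n`, and row `0` is row `0` of `binomialMatrix n` plus `Pi.single 0 1`.
  have pascal : ∀ (i : ℤ) (j : Fin (k + 1)),
      binom (n + 1 + j) (i + 1 - j) = binom (n + j) (i + 1 - j) + binom (n + j) (i - j) :=
    fun i j => by
      simpa [add_right_comm, sub_add_eq_add_sub] using binom_succ_succ (n + j) (i - j)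
  have hrow0 : A 0 = binomialMatrix n (k + 1) 0 + Pi.single 0 1 := by
    ext j
    refine (pascal 0 j).trans (congrArg _ ?_)
    rcases eq_or_ne j 0 with rfl | hj
    · simp [binom_zero_right]
    · rw [Pi.single_eq_of_ne hj, binom_of_neg]
      have := Fin.pos_iff_ne_zero.mpr hj
      omega
  have hkeep :
      (A.updateRow 0 (binomialMatrix n (k + 1) 0)).det = (binomialMatrix n (k + 1)).det := by
    refine (Matrix.det_eq_of_forall_row_eq_smul_add_pred (fun _ => -1) (fun j => ?_)
      fun i j => ?_).symm
    · simp
    · rw [Matrix.updateRow_ne (Fin.succ_ne_zero i)]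
      simp only [A, binomialMatrix, Matrix.of_apply, Fin.val_succ, Fin.val_castSucc, pascal]
      push_cast
      ring_nf
  have hminor : A.submatrix Fin.succ Fin.succ = binomialMatrix (n + 2) k := by
    ext i j
    simp only [A, binomialMatrix, Matrix.submatrix_apply, Matrix.of_apply, Fin.val_succ]
    congr 1 <;> push_cast <;> ring
  have hcorner : (A.updateRow 0 (Pi.single 0 1)).det = (binomialMatrix (n + 2) k).det := by
    rw [← Matrix.adjugate_apply, Matrix.adjugate_fin_succ_eq_det_submatrix, Fin.succAbove_zero,
      hminor]
    simp
  rw [← Matrix.updateRow_eq_self A 0, hrow0, Matrix.det_updateRow_add, hkeep, hcorner]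

theorem det_binomialMatrix_zero (k : ℕ) : (binomialMatrix 0 (k + 1)).det = 0 :=
  Matrix.det_eq_zero_of_column_eq_zero 0 fun i => by
    simp [binomialMatrix, binom]

theorem det_binomialMatrix_pos (n k : ℕ) : 0 < (binomialMatrix (n + 1) k).det := by
  induction k generalizing n with
  | zero => simp
  | succ k ih =>
    induction n with
    | zero => simpa [det_binomialMatrix_succ, det_binomialMatrix_zero] using ih 1
    | succ n ihn => rw [det_binomialMatrix_succ]; exact add_pos ihn (ih (n + 2))

theorem hgen_coeff_zero {j r : ℤ} (h : 0 ≤ j + r - 1) :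
    (hgen j r).coeff 0 = binom (j + r - 1).toNat (r - 1) := by
  unfold hgen binom
  split_ifs
  · simp [finsetSum_coeff, show (j + r - 1).toNat = j.toNat + (r - 1).toNat by omega]
  · omega
  · omega
  · omega
  · rw [coeff_zero, Nat.choose_eq_zero_of_lt (by omega), Nat.cast_zero]
  · rw [coeff_zero]

theorem P_isPalindromic (m k : ℕ) :
    IsPalindromic (∑ i : Fin k, ((m : ℤ) - k - i - 1) + ∑ j : Fin k, 2 * (j : ℤ)).toNat
      (P m k) := by
  have hentry : ∀ i j : Fin k, (m : ℤ) - k - i + 2 * j - 1 = ((m : ℤ) - k - i - 1) + 2 * j :=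
    fun i j => by ring
  refine Matrix.det_isPalindromic _ (fun i : Fin k => (m : ℤ) - k - i - 1)
    (fun j : Fin k => 2 * (j : ℤ)) (fun i j => ?_) fun i j hij => ?_
  · simpa only [Matrix.of_apply, hentry] using hgen_isPalindromic _ _
  · simpa only [Matrix.of_apply, hentry] using hgen_of_neg hij _

theorem P_coeff_zero {m k : ℕ} (hkm : k < m) :
    (P m k).coeff 0 = (binomialMatrix (m - k) k).det := by
  rw [P, ← constantCoeff_apply, RingHom.map_det]
  congr 1
  ext i j
  rw [RingHom.mapMatrix_apply, Matrix.map_apply, Matrix.of_apply, constantCoeff_apply,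
    hgen_coeff_zero (by omega)]
  simp only [binomialMatrix, Matrix.of_apply]
  congr 1 <;> omega

theorem P_eq_zero_of_le {m k : ℕ} (hk : 0 < k) (hmk : m ≤ k) : P m k = 0 :=
  Matrix.det_eq_zero_of_column_eq_zero ⟨0, hk⟩ fun i => hgen_of_neg (by push_cast; omega) _

/-- `P_{m,k}` is palindromic: with `d = deg P_{m,k}`, `q^d P_{m,k}(1/q) = P_{m,k}(q)`,
i.e. reversing the coefficient sequence up to the degree leaves it unchanged. -/
theorem stmt9 (m k : ℕ) :
    Polynomial.reflect (P m k).natDegree (P m k) = P m k := by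
  obtain hkm | hmk := lt_or_ge k m
  · have hcoeff : (P m k).coeff 0 ≠ 0 := by
      rw [P_coeff_zero hkm, show m - k = m - k - 1 + 1 by omega]
      exact (det_binomialMatrix_pos _ k).ne'
    rw [(P_isPalindromic m k).natDegree_eq hcoeff]
    exact (P_isPalindromic m k).reflect_eq
  · rcases k.eq_zero_or_pos with rfl | hk
    · simp [P]
    · simp [P_eq_zero_of_le hk hmk]
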